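/- Let D⁰, D¹ : ℕ → Type each carry, for every n, a free action of Equiv.Perm (Fin n), and let t : ∀ n, D¹ n → D⁰ n be equivariant maps. Write 𝔻⁰ and 𝔻¹ for the associated endofunctors of types, and for a function u : X₁ → X₀ write t∗u : 𝔻¹X₁ → 𝔻⁰X₀ for the map induced by (d, x) ↦ (t d, u ∘ x). Suppose given functions T : C₁ → C₀, T' : C'₁ → C'₀, F₁ : C₁ → C'₁, F₀ : C₀ → C'₀ with F₀ ∘ T = T' ∘ F₁ forming a pullback square of types. Then the square with horizontal maps t∗T : 𝔻¹C₁ → 𝔻⁰C₀ and t∗T' : 𝔻¹C'₁ → 𝔻⁰C'₀ and vertical maps 𝔻¹F₁ and 𝔻⁰F₀ is again a pullback square of types. (This expresses, at the level of object and morphism sets, that the monad associated to a Σ-free categorical operad preserves target covers and source covers of categories.) -/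

import Mathlib

/-!
Every element of `𝔻X` has representatives `(d, x)` with any prescribed first component in the
orbit of `d`. So, given compatible `[e, y] ∈ 𝔻⁰C₀` and `[d', z] ∈ 𝔻¹C'₁`, we may take `e = t d'`,
after which compatibility says `F₀ ∘ y = T' ∘ z` (freeness of `D⁰` kills the residual
permutation), and the unique lift is `[d', x]` with `x` the pointwise lift of `(y, z)` through
the pullback square. Uniqueness follows in the same way: any lift can be represented as
`[d', x']` with `F₁ ∘ x' = z`, and freeness of `D⁰` then forces `T ∘ x' = y`.
-/

/-- The relation on `D n × (Fin n → X)` identifying `(d, x)` with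
`σ • (d, x) = (σ • d, x ∘ σ⁻¹)`. -/
def OpRel (D : ℕ → Type) [∀ n, MulAction (Equiv.Perm (Fin n)) (D n)] (X : Type) (n : ℕ)
    (p q : D n × (Fin n → X)) : Prop :=
  ∃ σ : Equiv.Perm (Fin n), σ • p.1 = q.1 ∧ p.2 ∘ σ.symm = q.2

/-- The endofunctor of types associated to a family `D` with symmetric group actions. -/
def DD (D : ℕ → Type) [∀ n, MulAction (Equiv.Perm (Fin n)) (D n)] (X : Type) : Type :=
  Σ n : ℕ, Quot (OpRel D X n)

/-- The action of the endofunctor `𝔻` on functions, induced by `(d, x) ↦ (d, f ∘ x)`. -/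
def DDmap (D : ℕ → Type) [∀ n, MulAction (Equiv.Perm (Fin n)) (D n)] {X Y : Type}
    (f : X → Y) : DD D X → DD D Y :=
  fun a => ⟨a.1, Quot.map (fun p => (p.1, f ∘ p.2))
    (fun p q hpq => by
      obtain ⟨σ, h1, h2⟩ := hpq
      exact ⟨σ, h1, congrArg (fun u => f ∘ u) h2⟩) a.2⟩

/-- The map `t∗u : 𝔻¹X₁ → 𝔻⁰X₀` induced by an equivariant family `t : ∀ n, D¹ n → D⁰ n`
and a function `u : X₁ → X₀`, via `(d, x) ↦ (t d, u ∘ x)`. -/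
def DDtmap (D0 D1 : ℕ → Type)
    [∀ n, MulAction (Equiv.Perm (Fin n)) (D0 n)] [∀ n, MulAction (Equiv.Perm (Fin n)) (D1 n)]
    (t : ∀ n, D1 n → D0 n)
    (ht : ∀ (n : ℕ) (σ : Equiv.Perm (Fin n)) (d : D1 n), t n (σ • d) = σ • t n d)
    {X1 X0 : Type} (u : X1 → X0) : DD D1 X1 → DD D0 X0 :=
  fun a => ⟨a.1, Quot.map (fun p => (t a.1 p.1, u ∘ p.2))
    (fun p q hpq => by
      obtain ⟨σ, h1, h2⟩ := hpq
      exact ⟨σ, (ht a.1 σ p.1).symm.trans (congrArg (t a.1) h1),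
        congrArg (fun v => u ∘ v) h2⟩) a.2⟩

/-- A commutative square of types which is a pullback square. -/
def IsPB {A B C Z : Type*} (f : A → B) (j : A → C) (h : B → Z) (k : C → Z) : Prop :=
  (∀ a, h (f a) = k (j a)) ∧ ∀ (b : B) (c : C), h b = k c → ∃! a : A, f a = b ∧ j a = c

theorem IsPB.comp_left {A B C Z : Type*} {f : A → B} {j : A → C} {h : B → Z} {k : C → Z}
    (hpb : IsPB f j h k) (ι : Type*) :
    IsPB (fun x : ι → A => f ∘ x) (j ∘ ·) (h ∘ ·) (k ∘ ·) := by
  obtain ⟨hcomm, hlift⟩ := hpb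
  refine ⟨fun x => funext fun i => hcomm (x i), fun b c hbc => ?_⟩
  choose x hx hxu using fun i => hlift (b i) (c i) (congrFun hbc i)
  refine ⟨x, ⟨funext fun i => (hx i).1, funext fun i => (hx i).2⟩, ?_⟩
  rintro x' ⟨rfl, rfl⟩
  exact funext fun i => hxu i (x' i) ⟨rfl, rfl⟩

section

variable {D : ℕ → Type} [∀ n, MulAction (Equiv.Perm (Fin n)) (D n)] {X Y : Type}

theorem OpRel.equivalence (n : ℕ) : Equivalence (OpRel D X n) where
  refl _ := ⟨1, one_smul _ _, rfl⟩
  symm := by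
    rintro p q ⟨σ, h1, h2⟩
    refine ⟨σ⁻¹, by rw [← h1, inv_smul_smul], ?_⟩
    rw [← h2]
    ext i
    simp [Equiv.Perm.inv_def]
  trans := by
    rintro p q r ⟨σ, h1, h2⟩ ⟨τ, h3, h4⟩
    refine ⟨τ * σ, by rw [mul_smul, h1, h3], ?_⟩
    rw [← h4, ← h2]
    ext i
    simp [Equiv.Perm.mul_def]

namespace DD

theorem mk_eq_mk_iff {n : ℕ} {p q : D n × (Fin n → X)} :
    (⟨n, Quot.mk _ p⟩ : DD D X) = ⟨n, Quot.mk _ q⟩ ↔ OpRel D X n p q := by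
  rw [Sigma.mk.inj_iff, heq_iff_eq]
  exact ⟨fun h => (OpRel.equivalence n).eqvGen_iff.mp (Quot.eqvGen_exact h.2),
    fun h => ⟨rfl, Quot.sound h⟩⟩

theorem exists_rep (a : DD D X) : ∃ n d x, a = ⟨n, Quot.mk _ (d, x)⟩ := by
  obtain ⟨n, q⟩ := a
  obtain ⟨⟨d, x⟩, rfl⟩ := Quot.exists_rep q
  exact ⟨n, d, x, rfl⟩

theorem eq_of_mk_eq_mk
    (free : ∀ (n : ℕ) (σ : Equiv.Perm (Fin n)) (d : D n), σ • d = d → σ = 1)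
    {n : ℕ} {d : D n} {x y : Fin n → X}
    (h : (⟨n, Quot.mk _ (d, x)⟩ : DD D X) = ⟨n, Quot.mk _ (d, y)⟩) : x = y := by
  obtain ⟨σ, hσ, hxy⟩ := mk_eq_mk_iff.mp h
  obtain rfl := free n σ d hσ
  exact hxy

end DD

section Tmap

variable {D1 : ℕ → Type} [∀ n, MulAction (Equiv.Perm (Fin n)) (D1 n)] (t : ∀ n, D1 n → D n)
  (ht : ∀ (n : ℕ) (σ : Equiv.Perm (Fin n)) (d : D1 n), t n (σ • d) = σ • t n d)

theorem DDmap_DDtmap {Z : Type} (f : X → Y) (u : Z → X) (a : DD D1 Z) :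
    DDmap D f (DDtmap D D1 t ht u a) = DDtmap D D1 t ht (f ∘ u) a := by
  obtain ⟨n, d, x, rfl⟩ := DD.exists_rep a
  rfl

theorem DDtmap_DDmap {Z : Type} (f : Z → Y) (u : Y → X) (a : DD D1 Z) :
    DDtmap D D1 t ht u (DDmap D1 f a) = DDtmap D D1 t ht (u ∘ f) a := by
  obtain ⟨n, d, x, rfl⟩ := DD.exists_rep a
  rfl

end Tmap

theorem exists_eq_mk_of_DDmap_eq {f : X → Y} {a : DD D X} {n : ℕ} {d : D n} {z : Fin n → Y}
    (h : DDmap D f a = ⟨n, Quot.mk _ (d, z)⟩) :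
    ∃ x, a = ⟨n, Quot.mk _ (d, x)⟩ ∧ f ∘ x = z := by
  obtain ⟨m, e, x, rfl⟩ := DD.exists_rep a
  obtain rfl : m = n := congrArg Sigma.fst h
  obtain ⟨σ, rfl, rfl⟩ := DD.mk_eq_mk_iff.mp h
  exact ⟨x ∘ σ.symm, DD.mk_eq_mk_iff.mpr ⟨σ, rfl, rfl⟩, rfl⟩

end

theorem DD_preserves_covers_general
    (D0 D1 : ℕ → Type)
    [∀ n, MulAction (Equiv.Perm (Fin n)) (D0 n)] [∀ n, MulAction (Equiv.Perm (Fin n)) (D1 n)]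
    (free0 : ∀ (n : ℕ) (σ : Equiv.Perm (Fin n)) (d : D0 n), σ • d = d → σ = 1)
    (t : ∀ n, D1 n → D0 n)
    (ht : ∀ (n : ℕ) (σ : Equiv.Perm (Fin n)) (d : D1 n), t n (σ • d) = σ • t n d)
    {C1 C0 C1' C0' : Type}
    (T : C1 → C0) (T' : C1' → C0') (F1 : C1 → C1') (F0 : C0 → C0')
    (hpb : IsPB T F1 F0 T') :
    IsPB (DDtmap D0 D1 t ht T) (DDmap D1 F1) (DDmap D0 F0) (DDtmap D0 D1 t ht T') := by
  refine ⟨fun a => ?_, fun b c hbc => ?_⟩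
  · rw [DDmap_DDtmap, DDtmap_DDmap, show F0 ∘ T = T' ∘ F1 from funext hpb.1]
  obtain ⟨n, d, z, rfl⟩ := DD.exists_rep c
  obtain ⟨y, rfl, hyz⟩ := exists_eq_mk_of_DDmap_eq hbc
  obtain ⟨x, ⟨rfl, rfl⟩, hxu⟩ := (hpb.comp_left (Fin n)).2 y z hyz
  refine ⟨⟨n, Quot.mk _ (d, x)⟩, ⟨rfl, rfl⟩, fun a ⟨ha1, ha2⟩ => ?_⟩
  obtain ⟨x', rfl, hx'⟩ := exists_eq_mk_of_DDmap_eq ha2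
  rw [hxu x' ⟨DD.eq_of_mk_eq_mk free0 ha1, hx'⟩]

/-- The monad associated to a Σ-free categorical operad preserves target covers and source
covers, expressed at the level of object and morphism sets. -/
theorem DD_preserves_covers
    (D0 D1 : ℕ → Type)
    [∀ n, MulAction (Equiv.Perm (Fin n)) (D0 n)] [∀ n, MulAction (Equiv.Perm (Fin n)) (D1 n)]
    (free0 : ∀ (n : ℕ) (σ : Equiv.Perm (Fin n)) (d : D0 n), σ • d = d → σ = 1)
    (free1 : ∀ (n : ℕ) (σ : Equiv.Perm (Fin n)) (d : D1 n), σ • d = d → σ = 1)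
    (t : ∀ n, D1 n → D0 n)
    (ht : ∀ (n : ℕ) (σ : Equiv.Perm (Fin n)) (d : D1 n), t n (σ • d) = σ • t n d)
    {C1 C0 C1' C0' : Type}
    (T : C1 → C0) (T' : C1' → C0') (F1 : C1 → C1') (F0 : C0 → C0')
    (hpb : IsPB T F1 F0 T') :
    IsPB (DDtmap D0 D1 t ht T) (DDmap D1 F1) (DDmap D0 F0) (DDtmap D0 D1 t ht T') :=
  DD_preserves_covers_general D0 D1 free0 t ht T T' F1 F0 hpb
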